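/- arXiv:2212.07175 — 6 statements merged into one kernel-verified Lean document; each statement's English description precedes it below -/
import Mathlib

section
/- Let d ∈ (0,1) and (b_n) a sequence of positive reals with b_{n+1} = b_n(1 + d·y_n) where y_n ∈ [-1,1] for all n. If g_n := T(1 + y_n) for a fixed T > 0, and the sequence (b_n) is bounded above and bounded below away from 0, then the limit inferior of the averages G_N = (1/N)∑_{n=1}^N g_n is at least T. -/
open Real Filter Set

theorem eip1559_liminf_avg_ge_target
    (d T : ℝ) (hd : d ∈ Set.Ioo (0:ℝ) 1) (hT : 0 < T)
    (b y g : ℕ → ℝ)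
    (hbpos : ∀ n, 0 < b n)
    (hy : ∀ n, y n ∈ Set.Icc (-1 : ℝ) 1)
    (hrec : ∀ n, b (n + 1) = b n * (1 + d * y n))
    (hg : ∀ n, g n = T * (1 + y n))
    (hub : ∃ C : ℝ, ∀ n, b n ≤ C)
    (hlb : ∃ c : ℝ, 0 < c ∧ ∀ n, c ≤ b n) :
    T ≤ Filter.liminf (fun N : ℕ => (∑ n ∈ Finset.Icc 1 N, g n) / N) Filter.atTop := by
  obtain ⟨C, hC⟩ := hub
  obtain ⟨c, hc, hcb⟩ := hlb
  obtain ⟨hd0, hd1⟩ := hd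
  have hpos : ∀ n, 0 < 1 + d * y n := by
    intro n
    have h1 := hbpos (n + 1)
    rw [hrec n] at h1
    nlinarith [hbpos n]
  -- telescoping log bound
  have key : ∀ N, Real.log (b (N + 1)) - Real.log (b 1) ≤ d * ∑ n ∈ Finset.Icc 1 N, y n := by
    intro N
    induction N with
    | zero => simp
    | succ N ih =>
      rw [Finset.sum_Icc_succ_top (by omega : 1 ≤ N + 1)]
      have hlog : Real.log (b (N + 2)) = Real.log (b (N + 1)) + Real.log (1 + d * y (N + 1)) := by
        rw [hrec (N + 1), Real.log_mul (ne_of_gt (hbpos _)) (ne_of_gt (hpos _))]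
      have hle : Real.log (1 + d * y (N + 1)) ≤ d * y (N + 1) := by
        have := Real.log_le_sub_one_of_pos (hpos (N + 1))
        linarith
      rw [hlog, mul_add]
      linarith [ih, hle]
  set K : ℝ := (Real.log c - Real.log C) / d with hK
  have sumy : ∀ N, K ≤ ∑ n ∈ Finset.Icc 1 N, y n := by
    intro N
    rw [hK, div_le_iff₀ hd0]
    have h1 : Real.log c ≤ Real.log (b (N + 1)) := Real.log_le_log hc (hcb _)
    have h2 : Real.log (b 1) ≤ Real.log C :=
      Real.log_le_log (hbpos 1) (hC 1)
    have := key N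
    nlinarith
  -- lower bounding sequence
  set h : ℕ → ℝ := fun N => T + T * K / N with hh
  have htend : Filter.Tendsto h Filter.atTop (nhds T) := by
    have : Filter.Tendsto (fun N : ℕ => T * K / N) Filter.atTop (nhds 0) :=
      tendsto_const_div_atTop_nhds_zero_nat (T * K)
    have := this.const_add T
    simpa using this
  have hle : ∀ᶠ N in Filter.atTop, h N ≤ (∑ n ∈ Finset.Icc 1 N, g n) / N := by
    filter_upwards [Filter.eventually_ge_atTop 1] with N hN
    have hNpos : (0 : ℝ) < N := by exact_mod_cast hN
    have hsum : (∑ n ∈ Finset.Icc 1 N, g n) = N * T + T * ∑ n ∈ Finset.Icc 1 N, y n := by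
      have : ∀ n ∈ Finset.Icc 1 N, g n = T + T * y n := by
        intro n _; rw [hg n]; ring
      rw [Finset.sum_congr rfl this, Finset.sum_add_distrib, Finset.sum_const,
        ← Finset.mul_sum]
      simp [Nat.card_Icc]
    rw [hsum, hh]
    have hTK : T * K ≤ T * ∑ n ∈ Finset.Icc 1 N, y n :=
      mul_le_mul_of_nonneg_left (sumy N) (le_of_lt hT)
    show T + T * K / N ≤ _
    calc T + T * K / N ≤ T + T * (∑ n ∈ Finset.Icc 1 N, y n) / N := by gcongr
      _ = (N * T + T * ∑ n ∈ Finset.Icc 1 N, y n) / N := by field_simp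
  calc T = Filter.liminf h Filter.atTop := (htend.liminf_eq).symm
    _ ≤ _ := by
        have havgle : ∀ N : ℕ, (∑ n ∈ Finset.Icc 1 N, g n) / N ≤ 2 * T := by
          intro N
          rcases Nat.eq_zero_or_pos N with rfl | hN
          · simp; positivity
          · have hNpos : (0 : ℝ) < N := by exact_mod_cast hN
            rw [div_le_iff₀ hNpos]
            have : (∑ n ∈ Finset.Icc 1 N, g n) ≤ ∑ n ∈ Finset.Icc 1 N, 2 * T := by
              apply Finset.sum_le_sum
              intro n _
              rw [hg n]
              have := (hy n).2
              nlinarith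
            simpa [Nat.card_Icc, mul_comm] using this
        have hbd : Filter.IsBoundedUnder (· ≤ ·) Filter.atTop
            (fun N : ℕ => (∑ n ∈ Finset.Icc 1 N, g n) / N) :=
          ⟨2 * T, Filter.eventually_map.mpr (Filter.Eventually.of_forall havgle)⟩
        exact Filter.liminf_le_liminf hle htend.isBoundedUnder_ge hbd.isCoboundedUnder_ge
end

section
/- Let d ∈ (0,1) and (b_n) a sequence of positive reals with b_{n+1} = b_n(1 + d·y_n) where y_n ∈ [-1,1] for all n. If g_n := T(1 + y_n) for a fixed T > 0, and the sequence (b_n) is bounded above and bounded below away from 0, then the limit superior of the averages G_N = (1/N)∑_{n=1}^N g_n is at most 2T·(1 − ln(1+d)/ln(1−d))^{−1}. -/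
open Real Filter Set Topology

theorem eip1559_limsup_avg_le_bound
    (d T : ℝ) (hd : d ∈ Set.Ioo (0:ℝ) 1) (hT : 0 < T)
    (b y g : ℕ → ℝ)
    (hbpos : ∀ n, 0 < b n)
    (hy : ∀ n, y n ∈ Set.Icc (-1 : ℝ) 1)
    (hrec : ∀ n, b (n + 1) = b n * (1 + d * y n))
    (hg : ∀ n, g n = T * (1 + y n))
    (hub : ∃ C : ℝ, ∀ n, b n ≤ C)
    (hlb : ∃ c : ℝ, 0 < c ∧ ∀ n, c ≤ b n) :
    Filter.limsup (fun N : ℕ => (∑ n ∈ Finset.Icc 1 N, g n) / N) Filter.atTop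
      ≤ 2 * T * (1 - Real.log (1 + d) / Real.log (1 - d))⁻¹ := by
  obtain ⟨hd0, hd1⟩ := hd
  obtain ⟨C, hC⟩ := hub
  obtain ⟨c, hc0, hc⟩ := hlb
  set L1 := Real.log (1 + d) with hL1
  set L2 := Real.log (1 - d) with hL2
  have h1d : (0:ℝ) < 1 - d := by linarith
  have hL1pos : 0 < L1 := Real.log_pos (by linarith)
  have hL2neg : L2 < 0 := Real.log_neg h1d (by linarith)
  set A := (L1 - L2) / 2 with hA
  set B := (L1 + L2) / 2 with hB
  have hApos : 0 < A := by rw [hA]; linarith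
  set K := Real.log C - Real.log c with hK
  -- positivity of 1 + d * y n
  have hpos : ∀ n, 0 < 1 + d * y n := by
    intro n
    obtain ⟨h1, h2⟩ := hy n
    nlinarith
  -- chord inequality via concavity of log
  have chord : ∀ n, A * y n + B ≤ Real.log (1 + d * y n) := by
    intro n
    obtain ⟨h1, h2⟩ := hy n
    have hconc := strictConcaveOn_log_Ioi.concaveOn
    have h := hconc.2 (Set.mem_Ioi.mpr h1d) (Set.mem_Ioi.mpr (by linarith : (0:ℝ) < 1 + d))
      (show (0:ℝ) ≤ (1 - y n) / 2 by linarith) (show (0:ℝ) ≤ (1 + y n) / 2 by linarith)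
      (show (1 - y n) / 2 + (1 + y n) / 2 = 1 by ring)
    have hx : ((1 - y n) / 2) • (1 - d) + ((1 + y n) / 2) • (1 + d) = 1 + d * y n := by
      simp only [smul_eq_mul]; ring
    rw [hx] at h
    have hy' : ((1 - y n) / 2) • L2 + ((1 + y n) / 2) • L1 = A * y n + B := by
      simp only [smul_eq_mul, hA, hB]; ring
    rw [hy'] at h
    exact h
  -- telescoping
  have tel : ∀ N : ℕ, ∑ i ∈ Finset.range N, Real.log (1 + d * y (i + 1))
      = Real.log (b (N + 1)) - Real.log (b 1) := by
    intro N
    have step : ∀ i : ℕ, Real.log (1 + d * y (i + 1))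
        = Real.log (b (i + 1 + 1)) - Real.log (b (i + 1)) := by
      intro i
      rw [hrec (i + 1), Real.log_mul (ne_of_gt (hbpos _)) (ne_of_gt (hpos _))]
      ring
    calc ∑ i ∈ Finset.range N, Real.log (1 + d * y (i + 1))
        = ∑ i ∈ Finset.range N,
            (Real.log (b (i + 1 + 1)) - Real.log (b (i + 1))) := by
          exact Finset.sum_congr rfl fun i _ => step i
      _ = Real.log (b (N + 1)) - Real.log (b (0 + 1)) :=
          Finset.sum_range_sub (fun i => Real.log (b (i + 1))) N
      _ = Real.log (b (N + 1)) - Real.log (b 1) := by norm_num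
  -- key bound on partial sums of y
  have key : ∀ N : ℕ, A * (∑ i ∈ Finset.range N, y (i + 1)) + N * B ≤ K := by
    intro N
    have h1 : ∑ i ∈ Finset.range N, (A * y (i + 1) + B)
        ≤ ∑ i ∈ Finset.range N, Real.log (1 + d * y (i + 1)) :=
      Finset.sum_le_sum fun i _ => chord (i + 1)
    rw [tel N] at h1
    have h2 : ∑ i ∈ Finset.range N, (A * y (i + 1) + B)
        = A * (∑ i ∈ Finset.range N, y (i + 1)) + N * B := by
      rw [Finset.sum_add_distrib, Finset.sum_const, ← Finset.mul_sum]
      simp [nsmul_eq_mul]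
    rw [h2] at h1
    have h3 : Real.log (b (N + 1)) - Real.log (b 1) ≤ K := by
      have hCpos : 0 < C := lt_of_lt_of_le (hbpos 0) (hC 0)
      have hu : Real.log (b (N + 1)) ≤ Real.log C :=
        Real.log_le_log (hbpos _) (hC _)
      have hl : Real.log c ≤ Real.log (b 1) :=
        Real.log_le_log hc0 (hc _)
      rw [hK]; linarith
    linarith
  -- rewrite the Icc sum
  have hsum : ∀ N : ℕ, (∑ n ∈ Finset.Icc 1 N, g n)
      = N * T + T * (∑ i ∈ Finset.range N, y (i + 1)) := by
    intro N
    have : Finset.Icc 1 N = Finset.Ico 1 (N + 1) := by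
      rw [Finset.Ico_add_one_right_eq_Icc]
    rw [this, Finset.sum_Ico_eq_sum_range]
    simp only [Nat.add_sub_cancel]
    have step : ∀ i : ℕ, g (1 + i) = T + T * y (i + 1) := by
      intro i
      rw [add_comm 1 i, hg]; ring
    rw [Finset.sum_congr rfl fun i _ => step i, Finset.sum_add_distrib,
      Finset.sum_const, ← Finset.mul_sum]
    simp [nsmul_eq_mul]
  -- the dominating sequence
  set f : ℕ → ℝ := fun N => T + T * ((K / N - B) / A) with hf
  -- eventual inequality
  have hle : (fun N : ℕ => (∑ n ∈ Finset.Icc 1 N, g n) / N) ≤ᶠ[atTop] f := by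
    filter_upwards [Filter.eventually_ge_atTop 1] with N hN
    have hNpos : (0:ℝ) < N := by exact_mod_cast hN
    set S := ∑ i ∈ Finset.range N, y (i + 1) with hS
    have hS2 : S ≤ ((K / N - B) / A) * N := by
      have he : ((K / (N:ℝ) - B) / A) * N = (K - N * B) / A := by
        field_simp
      rw [he, le_div_iff₀ hApos]
      nlinarith [key N]
    rw [hsum N, hf]
    rw [div_le_iff₀ hNpos]
    nlinarith [mul_le_mul_of_nonneg_left hS2 hT.le]
  -- limit of f
  have htend : Tendsto f atTop (𝓝 (T + T * ((0 - B) / A))) := by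
    have h0 : Tendsto (fun N : ℕ => K / (N:ℝ)) atTop (𝓝 0) :=
      tendsto_const_nhds.div_atTop tendsto_natCast_atTop_atTop
    exact ((((h0.sub_const B).div_const A).const_mul T).const_add T)
  -- identify the limit with the bound
  have hlim : T + T * ((0 - B) / A) = 2 * T * (1 - L1 / L2)⁻¹ := by
    have hL2ne : L2 ≠ 0 := ne_of_lt hL2neg
    have hne : L1 - L2 ≠ 0 := by intro h; nlinarith
    have hne2 : L2 - L1 ≠ 0 := by intro h; nlinarith
    have e1 : 1 - L1 / L2 = (L2 - L1) / L2 := by field_simp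
    rw [hA, hB, e1, inv_div]
    field_simp
    ring
  -- limsup comparison
  have hcob : IsCoboundedUnder (· ≤ ·) atTop
      (fun N : ℕ => (∑ n ∈ Finset.Icc 1 N, g n) / N) := by
    apply isCoboundedUnder_le_of_le atTop (x := 0)
    intro N
    apply div_nonneg _ (Nat.cast_nonneg N)
    apply Finset.sum_nonneg
    intro n _
    rw [hg]
    have := (hy n).1
    nlinarith
  have hbdd : IsBoundedUnder (· ≤ ·) atTop f := htend.isBoundedUnder_le
  calc Filter.limsup (fun N : ℕ => (∑ n ∈ Finset.Icc 1 N, g n) / N) atTop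
      ≤ Filter.limsup f atTop := Filter.limsup_le_limsup hle hcob hbdd
    _ = T + T * ((0 - B) / A) := htend.limsup_eq
    _ = 2 * T * (1 - L1 / L2)⁻¹ := hlim
end

section
/- Let h : (0,∞) → (0,∞) be a proper base fee update rule with constant α ≥ 1, i.e., (A.1) h(b) ≥ b whenever g(b) ≥ T and h(b) ≤ b whenever g(b) ≤ T, and (A.2) α^{−1}b ≤ h(b) ≤ αb for all b, where g : (0,∞) → ℝ is nonincreasing and b* satisfies g(b*) = T. Then the sequence b_{n+1} = h(b_n) with b_0 > 0 satisfies min{b_0, α^{−1}b*} ≤ b_n ≤ max{b_0, α b*} for all n ≥ 0. -/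
open Real Set

theorem pbfur_bounded
    (h g : ℝ → ℝ) (T bstar α : ℝ)
    (hα : 1 ≤ α) (hbstar : 0 < bstar)
    (hgmono : ∀ x y : ℝ, 0 < x → x ≤ y → g y ≤ g x)
    (hclear : g bstar = T)
    (hA1 : ∀ x : ℝ, 0 < x → (g x ≥ T → h x ≥ x) ∧ (g x ≤ T → h x ≤ x))
    (hA2 : ∀ x : ℝ, 0 < x → α⁻¹ * x ≤ h x ∧ h x ≤ α * x)
    (b : ℕ → ℝ) (hb0 : 0 < b 0)
    (hbpos : ∀ n, 0 < b n)
    (hrec : ∀ n, b (n + 1) = h (b n)) :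
    ∀ n : ℕ, min (b 0) (α⁻¹ * bstar) ≤ b n ∧ b n ≤ max (b 0) (α * bstar) := by
  have hα0 : (0:ℝ) < α := lt_of_lt_of_le one_pos hα
  intro n
  induction n with
  | zero =>
    constructor
    · exact min_le_left _ _
    · exact le_max_left _ _
  | succ n ih =>
    obtain ⟨ihl, ihr⟩ := ih
    have hpos := hbpos n
    rw [hrec n]
    constructor
    · rcases le_total (b n) bstar with hle | hge
      · -- g (b n) ≥ T, so h (b n) ≥ b n
        have hg : g (b n) ≥ T := hclear ▸ hgmono (b n) bstar hpos hle
        exact le_trans ihl ((hA1 (b n) hpos).1 hg)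
      · -- h (b n) ≥ α⁻¹ * b n ≥ α⁻¹ * bstar
        have h1 : α⁻¹ * bstar ≤ α⁻¹ * b n :=
          mul_le_mul_of_nonneg_left hge (inv_nonneg.mpr hα0.le)
        exact le_trans (min_le_right _ _) (le_trans h1 (hA2 (b n) hpos).1)
    · rcases le_total bstar (b n) with hge | hle
      · have hg : g (b n) ≤ T := hclear ▸ hgmono bstar (b n) hbstar hge
        exact le_trans ((hA1 (b n) hpos).2 hg) ihr
      · have h1 : α * b n ≤ α * bstar := mul_le_mul_of_nonneg_left hle hα0.le
        exact le_trans (le_trans (hA2 (b n) hpos).2 h1) (le_max_right _ _)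
end

section
/- Let d ∈ (0,1), T > 0, and let (b_n), (g_n) satisfy b_{n+1} = b_n(1 + d(g_n − T)/T) with g_n ∈ [0, 2T] and c ≤ b_n ≤ C for constants 0 < c ≤ C. Then for every N ≥ 1, (1/N)∑_{n=1}^N g_n ≥ T − T·ln(C/c)/(N·d). -/
open Real

theorem eip1559_finite_lower_bound
    (d T c C : ℝ) (hd : d ∈ Set.Ioo (0:ℝ) 1) (hT : 0 < T)
    (hc : 0 < c) (hcC : c ≤ C)
    (b g : ℕ → ℝ)
    (hg : ∀ n, g n ∈ Set.Icc (0:ℝ) (2 * T))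
    (hrec : ∀ n, b (n + 1) = b n * (1 + d * (g n - T) / T))
    (hbd : ∀ n, c ≤ b n ∧ b n ≤ C) :
    ∀ N : ℕ, 1 ≤ N →
      T - T * Real.log (C / c) / (N * d) ≤ (∑ n ∈ Finset.Icc 1 N, g n) / N := by
  obtain ⟨hd0, hd1⟩ := hd
  have hbpos : ∀ n, 0 < b n := fun n => lt_of_lt_of_le hc (hbd n).1
  have key : ∀ n, Real.log (b (n + 1)) - Real.log (b n) ≤ d * (g n - T) / T := by
    intro n
    have hg0 := (hg n).1
    have hx : 0 < 1 + d * (g n - T) / T := by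
      have : 1 + d * (g n - T) / T = (T + d * (g n - T)) / T := by field_simp
      rw [this]
      apply div_pos _ hT
      nlinarith
    have hlog : Real.log (b (n + 1)) = Real.log (b n) + Real.log (1 + d * (g n - T) / T) := by
      rw [hrec n, Real.log_mul (ne_of_gt (hbpos n)) (ne_of_gt hx)]
    have hle : Real.log (1 + d * (g n - T) / T) ≤ d * (g n - T) / T := by
      have := Real.log_le_sub_one_of_pos hx
      linarith
    rw [hlog]; linarith
  intro N hN
  have hNpos : (0:ℝ) < N := by exact_mod_cast hN
  -- telescoping
  have htel : Real.log (b (N + 1)) - Real.log (b 1) =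
      ∑ n ∈ Finset.range N, (Real.log (b (n + 1 + 1)) - Real.log (b (n + 1))) := by
    rw [Finset.sum_range_sub (fun n => Real.log (b (n + 1))) N]
  have hsum : Real.log (b (N + 1)) - Real.log (b 1) ≤
      ∑ n ∈ Finset.range N, d * (g (n + 1) - T) / T := by
    rw [htel]
    exact Finset.sum_le_sum fun n _ => key (n + 1)
  have hshift : (∑ n ∈ Finset.Icc 1 N, g n) = ∑ n ∈ Finset.range N, g (n + 1) := by
    rw [← Finset.Ico_add_one_right_eq_Icc, Finset.sum_Ico_eq_sum_range]
    simp [add_comm]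
  set S := ∑ n ∈ Finset.Icc 1 N, g n with hS
  have hsum2 : ∑ n ∈ Finset.range N, d * (g (n + 1) - T) / T = d * (S - N * T) / T := by
    rw [hshift]
    calc ∑ n ∈ Finset.range N, d * (g (n + 1) - T) / T
        = ∑ n ∈ Finset.range N, ((d / T) * g (n + 1) - d) :=
          Finset.sum_congr rfl (fun n _ => by field_simp)
      _ = (d / T) * (∑ n ∈ Finset.range N, g (n + 1)) - N * d := by
          rw [Finset.sum_sub_distrib, Finset.sum_const, Finset.card_range, ← Finset.mul_sum]
          simp [nsmul_eq_mul]
      _ = d * ((∑ n ∈ Finset.range N, g (n + 1)) - N * T) / T := by field_simp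
  have hlb : -Real.log (C / c) ≤ Real.log (b (N + 1)) - Real.log (b 1) := by
    have h1 : Real.log (b (N + 1)) ≥ Real.log c :=
      Real.log_le_log hc (hbd (N + 1)).1
    have h2 : Real.log (b 1) ≤ Real.log C := by
      apply Real.log_le_log (hbpos 1) (hbd 1).2
    have : Real.log (C / c) = Real.log C - Real.log c := by
      rw [Real.log_div (by linarith : C ≠ 0) (ne_of_gt hc)]
    linarith
  have hmain : -Real.log (C / c) ≤ d * (S - N * T) / T := by
    rw [← hsum2]; linarith
  have hNd : 0 < (N:ℝ) * d := mul_pos hNpos hd0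
  have h2 : d * N * T - T * Real.log (C / c) ≤ d * S := by
    have h3 := (le_div_iff₀ hT).mp hmain
    nlinarith
  rw [le_div_iff₀ hNpos]
  have heq : (T - T * Real.log (C / c) / (N * d)) * N = (d * N * T - T * Real.log (C / c)) / d := by
    field_simp
  rw [heq, div_le_iff₀ hd0]
  nlinarith
end

section
/- Let d ∈ (0,1), T > 0, α = (ln(1+d) − ln(1−d))/(2d), β = (ln(1+d) + ln(1−d))/2, and let (b_n), (g_n) satisfy b_{n+1} = b_n(1 + d(g_n − T)/T) with g_n ∈ [0, 2T] and c ≤ b_n ≤ C for constants 0 < c ≤ C. Then for every N ≥ 1, (1/N)∑_{n=1}^N g_n ≤ T·ln(C/c)/(N·α·d) + (1 − β/(α d))·T. -/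
open Real

/-!
Write `x n = d (g n - T) / T ∈ [-d, d]`, so that `log b (n+1) - log b n = log (1 + x n)`.
On `[-d, d]` the concave function `log (1 + x)` lies above its chord `α x + β`, hence
`α x n + β ≤ log b (n+1) - log b n`. Summing over `n = 1, …, N` telescopes the right-hand side
to at most `log (C / c)`, while the left-hand side is affine in `∑ g n`; solving for the
average gives the bound.
-/

lemma chord_le_log_one_add {d x : ℝ} (hd : d ∈ Set.Ioo (0 : ℝ) 1) (hx : x ∈ Set.Icc (-d) d) :
    (log (1 + d) - log (1 - d)) / (2 * d) * x + (log (1 + d) + log (1 - d)) / 2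
      ≤ log (1 + x) := by
  obtain ⟨hd0, hd1⟩ := hd
  obtain ⟨hxl, hxu⟩ := hx
  have hconc := strictConcaveOn_log_Ioi.concaveOn.2
    (Set.mem_Ioi.2 (by linarith : (0 : ℝ) < 1 - d)) (Set.mem_Ioi.2 (by linarith : (0 : ℝ) < 1 + d))
    (div_nonneg (by linarith : 0 ≤ d - x) (by linarith : (0 : ℝ) ≤ 2 * d))
    (div_nonneg (by linarith : 0 ≤ d + x) (by linarith : (0 : ℝ) ≤ 2 * d))
    (by field_simp; ring)
  have hpoint : (d - x) / (2 * d) * (1 - d) + (d + x) / (2 * d) * (1 + d) = 1 + x := by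
    field_simp; ring
  rw [smul_eq_mul, smul_eq_mul, smul_eq_mul, smul_eq_mul, hpoint] at hconc
  calc (log (1 + d) - log (1 - d)) / (2 * d) * x + (log (1 + d) + log (1 - d)) / 2
      = (d - x) / (2 * d) * log (1 - d) + (d + x) / (2 * d) * log (1 + d) := by
        field_simp; ring
    _ ≤ log (1 + x) := hconc

lemma chord_le_log_mul_one_add_sub_log {d x b : ℝ} (hd : d ∈ Set.Ioo (0 : ℝ) 1)
    (hx : x ∈ Set.Icc (-d) d) (hb : 0 < b) :
    (log (1 + d) - log (1 - d)) / (2 * d) * x + (log (1 + d) + log (1 - d)) / 2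
      ≤ log (b * (1 + x)) - log b := by
  have h1x : 0 < 1 + x := by linarith [hx.1, hd.2]
  rw [log_mul hb.ne' h1x.ne', add_sub_cancel_left]
  exact chord_le_log_one_add hd hx

lemma chord_slope_pos {d : ℝ} (hd : d ∈ Set.Ioo (0 : ℝ) 1) :
    0 < (log (1 + d) - log (1 - d)) / (2 * d) := by
  obtain ⟨hd0, hd1⟩ := hd
  have := log_lt_log (by linarith : (0 : ℝ) < 1 - d) (by linarith : 1 - d < 1 + d)
  exact div_pos (by linarith) (by linarith)

lemma log_sub_log_le_log_div {c C x y : ℝ} (hc : 0 < c) (hx : c ≤ x) (hy0 : 0 < y) (hy : y ≤ C) :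
    log y - log x ≤ log (C / c) := by
  rw [log_div (hy0.trans_le hy).ne' hc.ne']
  linarith [log_le_log hy0 hy, log_le_log hc hx]

lemma mul_sub_div_mem_Icc {d T g : ℝ} (hd : 0 ≤ d) (hT : 0 < T) (hg : g ∈ Set.Icc 0 (2 * T)) :
    d * (g - T) / T ∈ Set.Icc (-d) d := by
  obtain ⟨hg0, hg2⟩ := hg
  constructor
  · rw [le_div_iff₀ hT]; nlinarith
  · rw [div_le_iff₀ hT]; nlinarith

lemma div_le_of_div_mul_add_mul_sub_le {a β T L S N : ℝ} (ha : 0 < a) (hT : 0 < T) (hN : 0 < N)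
    (h : a / T * S + N * (β - a) ≤ L) : S / N ≤ T * L / (N * a) + (1 - β / a) * T := by
  have hS : S ≤ T / a * (L - N * (β - a)) :=
    calc S = T / a * (a / T * S) := by field_simp
      _ ≤ T / a * (L - N * (β - a)) := by gcongr; linarith
  rw [div_le_iff₀ hN]
  refine hS.trans_eq ?_
  field_simp
  ring

theorem eip1559_finite_upper_bound_general
    (d T c C : ℝ) (hd : d ∈ Set.Ioo (0:ℝ) 1) (hT : 0 < T)
    (hc : 0 < c)
    (b g : ℕ → ℝ)
    (hg : ∀ n, g n ∈ Set.Icc (0:ℝ) (2 * T))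
    (hrec : ∀ n, b (n + 1) = b n * (1 + d * (g n - T) / T))
    (hbd : ∀ n, c ≤ b n ∧ b n ≤ C) :
    ∀ N : ℕ, 1 ≤ N →
      (∑ n ∈ Finset.Icc 1 N, g n) / N ≤
        T * Real.log (C / c) /
          (N * ((Real.log (1 + d) - Real.log (1 - d)) / (2 * d)) * d) +
        (1 - ((Real.log (1 + d) + Real.log (1 - d)) / 2) /
          (((Real.log (1 + d) - Real.log (1 - d)) / (2 * d)) * d)) * T := by
  intro N hN
  set α := (log (1 + d) - log (1 - d)) / (2 * d)
  set β := (log (1 + d) + log (1 - d)) / 2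
  set S := ∑ n ∈ Finset.Icc 1 N, g n
  have hb : ∀ n, 0 < b n := fun n => hc.trans_le (hbd n).1
  have hstep : ∀ n, α * (d * (g n - T) / T) + β ≤ log (b (n + 1)) - log (b n) := fun n =>
    hrec n ▸ chord_le_log_mul_one_add_sub_log hd (mul_sub_div_mem_Icc hd.1.le hT (hg n)) (hb n)
  have hsum : α * d / T * S + N * (β - α * d) ≤ log (C / c) :=
    calc α * d / T * S + N * (β - α * d)
        = ∑ n ∈ Finset.Icc 1 N, (α * d / T * g n + (β - α * d)) := by
          rw [Finset.sum_add_distrib, ← Finset.mul_sum, Finset.sum_const, Nat.card_Icc,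
            Nat.add_sub_cancel, nsmul_eq_mul]
      _ = ∑ n ∈ Finset.Icc 1 N, (α * (d * (g n - T) / T) + β) :=
          Finset.sum_congr rfl fun n _ => by field_simp; ring
      _ ≤ ∑ n ∈ Finset.Icc 1 N, (log (b (n + 1)) - log (b n)) :=
          Finset.sum_le_sum fun n _ => hstep n
      _ = log (b (N + 1)) - log (b 1) := Finset.sum_Icc_sub hN (fun n => log (b n))
      _ ≤ log (C / c) := log_sub_log_le_log_div hc (hbd 1).1 (hb (N + 1)) (hbd (N + 1)).2
  rw [mul_assoc (N : ℝ)]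
  exact div_le_of_div_mul_add_mul_sub_le (mul_pos (chord_slope_pos hd) hd.1) hT
    (by exact_mod_cast hN) hsum

theorem eip1559_finite_upper_bound
    (d T c C : ℝ) (hd : d ∈ Set.Ioo (0:ℝ) 1) (hT : 0 < T)
    (hc : 0 < c) (hcC : c ≤ C)
    (b g : ℕ → ℝ)
    (hg : ∀ n, g n ∈ Set.Icc (0:ℝ) (2 * T))
    (hrec : ∀ n, b (n + 1) = b n * (1 + d * (g n - T) / T))
    (hbd : ∀ n, c ≤ b n ∧ b n ≤ C) :
    ∀ N : ℕ, 1 ≤ N →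
      (∑ n ∈ Finset.Icc 1 N, g n) / N ≤
        T * Real.log (C / c) /
          (N * ((Real.log (1 + d) - Real.log (1 - d)) / (2 * d)) * d) +
        (1 - ((Real.log (1 + d) + Real.log (1 - d)) / 2) /
          (((Real.log (1 + d) - Real.log (1 - d)) / (2 * d)) * d)) * T :=
  eip1559_finite_upper_bound_general d T c C hd hT hc b g hg hrec hbd
end

section
/- For d ∈ (0, 1/2], the function y(d) = (1 − ln(1+d)/ln(1−d))^{−1} satisfies 1/2 < y(d) ≤ 1/2 + d; i.e., the overshoot factor above 1/2 grows at most linearly in d. -/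
open Real

theorem eip1559_bound_factor_linear_growth (d : ℝ) (hd : d ∈ Set.Ioc (0:ℝ) (1/2)) :
    1 / 2 < (1 - Real.log (1 + d) / Real.log (1 - d))⁻¹ ∧
      (1 - Real.log (1 + d) / Real.log (1 - d))⁻¹ ≤ 1 / 2 + d := by
  obtain ⟨hd0, hd2⟩ := hd
  have h1 : (0:ℝ) < 1 + d := by linarith
  have h2 : (0:ℝ) < 1 - d := by linarith
  set a := Real.log (1 + d) with ha_def
  set b := Real.log (1 - d) with hb_def
  have ha : 0 < a := Real.log_pos (by linarith)
  have hb : b < 0 := Real.log_neg h2 (by linarith)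
  -- upper bound on a : a ≤ d
  have la : a ≤ d := by
    have := Real.log_le_sub_one_of_pos h1
    linarith
  -- strict upper bound on b : b < -d
  have lb' : b < -d := by
    have := Real.log_lt_sub_one_of_pos h2 (by linarith)
    linarith
  -- lower bound on a : d ≤ (1+d) * a
  have la' : d ≤ (1 + d) * a := by
    have h := Real.log_le_sub_one_of_pos (x := (1 + d)⁻¹) (by positivity)
    rw [Real.log_inv] at h
    have h' : -((1 + d) * a) ≤ (1 + d) * ((1 + d)⁻¹ - 1) := by
      have := mul_le_mul_of_nonneg_left h (le_of_lt h1)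
      linarith [this]
    have hinv : (1 + d) * (1 + d)⁻¹ = 1 := mul_inv_cancel₀ (ne_of_gt h1)
    nlinarith [h']
  -- lower bound on b : -d ≤ (1-d) * b
  have lb : -d ≤ (1 - d) * b := by
    have h := Real.log_le_sub_one_of_pos (x := (1 - d)⁻¹) (by positivity)
    rw [Real.log_inv] at h
    have h' : -((1 - d) * b) ≤ (1 - d) * ((1 - d)⁻¹ - 1) := by
      have := mul_le_mul_of_nonneg_left h (le_of_lt h2)
      linarith [this]
    have hinv : (1 - d) * (1 - d)⁻¹ = 1 := mul_inv_cancel₀ (ne_of_gt h2)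
    nlinarith [h']
  -- key inequality: (1/2 - d) * (-b) ≤ (1/2 + d) * a
  have hf : (1/2 - d) * (-b) ≤ (1/2 + d) * a := by
    nlinarith [la', lb, mul_pos h1 h2, sq_nonneg d]
  have hnb : 0 < -b := by linarith
  -- rewrite a / b as -(a / (-b))
  have hdivneg : a / b = -(a / -b) := by
    rw [div_neg, neg_neg]
  constructor
  · -- lower bound
    have hlt1 : a / -b < 1 := (div_lt_one hnb).mpr (by linarith)
    have hx2 : 1 - a / b < 2 := by rw [hdivneg]; linarith
    have hx0 : 0 < 1 - a / b := by
      have : a / b < 0 := div_neg_of_pos_of_neg ha hb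
      linarith
    calc (1:ℝ)/2 = 2⁻¹ := by norm_num
      _ < (1 - a / b)⁻¹ := by
          exact inv_strictAnti₀ hx0 hx2
  · -- upper bound
    have hden : (0:ℝ) < 1/2 + d := by linarith
    have hdiv : (1/2 - d) / (1/2 + d) ≤ a / -b := by
      rw [div_le_div_iff₀ hden hnb]
      nlinarith [hf]
    have hxlow : (1/2 + d)⁻¹ ≤ 1 - a / b := by
      rw [hdivneg]
      have heq : (1:ℝ) + (1/2 - d) / (1/2 + d) = (1/2 + d)⁻¹ := by
        rw [eq_comm, inv_eq_iff_eq_inv, eq_comm, inv_eq_one_div]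
        field_simp
        ring
      linarith [hdiv]
    have hx0 : 0 < (1/2 + d)⁻¹ := by positivity
    calc (1 - a / b)⁻¹ ≤ ((1/2 + d)⁻¹)⁻¹ := inv_anti₀ hx0 hxlow
      _ = 1/2 + d := inv_inv _
end
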